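/- arXiv:1409.8125 — 3 statements merged into one kernel-verified Lean document; each statement's English description precedes it below -/
import Mathlib

section
/- Let M ≥ 5 be prime and let k, k', l, l' ∈ {0,…,M−1} with k ≠ k'. Then the inner product of the Gabor frame vectors g_{k,l} and g_{k',l'} has modulus exactly √M: |⟨g_{k,l}, g_{k',l'}⟩| = √M. -/
/-!
The cubic terms of `g_{k,l}(m) · conj g_{k',l'}(m)` cancel, so `⟨g_{k,l}, g_{k',l'}⟩` is a sum
`∑ₓ ψ(a x² + b x + c)` over `ZMod M` with `a = 3(k' - k) ≠ 0`. Squaring it and substituting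
`x = y + d` turns the inner sum over `y` into a complete sum of the linear character
`y ↦ ψ(2 a d y)`, which vanishes unless `d = 0`; hence `|⟨g_{k,l}, g_{k',l'}⟩|² = M`.
-/

open scoped BigOperators

/-- The Gabor frame vector `g_{k,l} ∈ ℂ^M`, with
`g_{k,l}(m) = exp(2πi·((m−k)³ + l·m)/M)`. -/
noncomputable def gabor (M : ℕ) (k l : Fin M) : Fin M → ℂ :=
  fun m => Complex.exp (2 * Real.pi * Complex.I *
    ((((m : ℕ) : ℂ) - ((k : ℕ) : ℂ)) ^ 3 + ((l : ℕ) : ℂ) * ((m : ℕ) : ℂ)) / (M : ℂ))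

/-- The inner product `⟨u,v⟩ = ∑_{m} u(m)·conj(v(m))` on `ℂ^M`. -/
noncomputable def gip (M : ℕ) (u v : Fin M → ℂ) : ℂ :=
  ∑ m : Fin M, u m * (starRingEnd ℂ) (v m)

open Finset ComplexConjugate

namespace AddChar

theorem norm_sum_sq_eq_sum_sum_sub {G : Type*} [AddCommGroup G] [Fintype G]
    (ψ : AddChar G ℂ) (f : G → G) :
    ((‖∑ x, ψ (f x)‖ ^ 2 : ℝ) : ℂ) = ∑ d, ∑ y, ψ (f (y + d) - f y) := by
  rw [← Complex.normSq_eq_norm_sq, ← Complex.mul_conj, map_sum, sum_mul_sum]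
  conv_lhs => rw [sum_comm]
  conv_rhs => rw [sum_comm]
  refine sum_congr rfl fun y _ => ?_
  rw [← Fintype.sum_equiv (Equiv.addLeft y) _ _ fun _ => rfl]
  refine sum_congr rfl fun d _ => ?_
  rw [Equiv.coe_addLeft, ← map_neg_eq_conj, ← map_add_eq_mul, sub_eq_add_neg]

theorem norm_sum_quadratic_eq_sqrt_card {F : Type*} [Field F] [Fintype F] {ψ : AddChar F ℂ}
    (hψ : ψ.IsPrimitive) (h2 : (2 : F) ≠ 0) {a : F} (ha : a ≠ 0) (b c : F) :
    ‖∑ x, ψ (a * x ^ 2 + b * x + c)‖ = √(Fintype.card F) := by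
  classical
  have hdiff : ∀ d, ∑ y, ψ ((a * (y + d) ^ 2 + b * (y + d) + c) - (a * y ^ 2 + b * y + c)) =
      if d = 0 then (Fintype.card F : ℂ) else 0 := by
    intro d
    have hlin : ∀ y, ψ ((a * (y + d) ^ 2 + b * (y + d) + c) - (a * y ^ 2 + b * y + c)) =
        ψ (a * d ^ 2 + b * d) * ψ (y * (2 * a * d)) := by
      intro y
      rw [← map_add_eq_mul]
      congr 1
      ring
    simp_rw [hlin, ← mul_sum, sum_mulShift _ hψ, mul_eq_zero, h2, ha, false_or]
    split_ifs with hd <;> simp [hd]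
  have hsq : ‖∑ x, ψ (a * x ^ 2 + b * x + c)‖ ^ 2 = Fintype.card F := by
    have := norm_sum_sq_eq_sum_sum_sub ψ (fun x => a * x ^ 2 + b * x + c)
    simp_rw [hdiff, sum_ite_eq', mem_univ, if_true] at this
    exact_mod_cast this
  rw [← hsq, Real.sqrt_sq (norm_nonneg _)]

end AddChar

theorem ZMod.natCast_finVal_bijective (N : ℕ) [NeZero N] :
    Function.Bijective (fun m : Fin N => ((m : ℕ) : ZMod N)) := by
  refine (Fintype.bijective_iff_injective_and_card _).mpr ⟨fun m m' h => ?_, by simp⟩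
  have hval := congrArg ZMod.val h
  rwa [ZMod.val_cast_of_lt m.isLt, ZMod.val_cast_of_lt m'.isLt, Fin.val_inj] at hval

theorem gabor_eq_stdAddChar (M : ℕ) [NeZero M] (k l m : Fin M) :
    gabor M k l m =
      ZMod.stdAddChar
        (((m.val : ZMod M) - (k.val : ZMod M)) ^ 3 + (l.val : ZMod M) * (m.val : ZMod M)) := by
  have hcast : ((m.val : ZMod M) - (k.val : ZMod M)) ^ 3 + (l.val : ZMod M) * (m.val : ZMod M) =
      ((((m.val : ℤ) - k.val) ^ 3 + (l.val : ℤ) * m.val : ℤ) : ZMod M) := by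
    norm_cast
  rw [hcast, ZMod.stdAddChar_coe, gabor]
  push_cast
  ring_nf

theorem gip_gabor_eq_sum (M : ℕ) [NeZero M] (k k' l l' : Fin M) :
    gip M (gabor M k l) (gabor M k' l') =
      ∑ x : ZMod M, ZMod.stdAddChar
        ((x - (k.val : ZMod M)) ^ 3 - (x - (k'.val : ZMod M)) ^ 3 +
          ((l.val : ZMod M) - (l'.val : ZMod M)) * x) := by
  rw [gip, ← Fintype.sum_bijective _ (ZMod.natCast_finVal_bijective M) _ _ fun _ => rfl]
  refine sum_congr rfl fun m _ => ?_
  rw [gabor_eq_stdAddChar, gabor_eq_stdAddChar, ← AddChar.map_neg_eq_conj,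
    ← AddChar.map_add_eq_mul]
  ring_nf

/-- For a prime `M ≥ 5` and distinct shift indices `k ≠ k'`, the inner product of
`g_{k,l}` and `g_{k',l'}` has modulus exactly `√M`. -/
theorem gabor_cross_shift_abs (M : ℕ) (hM : Nat.Prime M) (hM5 : 5 ≤ M)
    (k k' l l' : Fin M) (hkk' : k ≠ k') :
    ‖gip M (gabor M k l) (gabor M k' l')‖ = Real.sqrt M := by
  have : Fact M.Prime := ⟨hM⟩
  have hsmall : ∀ n : ℕ, 0 < n → n < M → (n : ZMod M) ≠ 0 := fun n h0 hn =>
    (ZMod.natCast_eq_zero_iff n M).not.mpr (Nat.not_dvd_of_pos_of_lt h0 hn)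
  have h2 : (2 : ZMod M) ≠ 0 := by exact_mod_cast hsmall 2 two_pos (by omega)
  have h3 : (3 : ZMod M) ≠ 0 := by exact_mod_cast hsmall 3 three_pos (by omega)
  rw [gip_gabor_eq_sum]
  set κ : ZMod M := (k.val : ZMod M)
  set κ' : ZMod M := (k'.val : ZMod M)
  set μ : ZMod M := (l.val : ZMod M) - (l'.val : ZMod M)
  have hκ : κ' - κ ≠ 0 :=
    sub_ne_zero.mpr fun h => hkk' ((ZMod.natCast_finVal_bijective M).injective h.symm)
  have hquad : ∀ x : ZMod M, (x - κ) ^ 3 - (x - κ') ^ 3 + μ * x =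
      3 * (κ' - κ) * x ^ 2 + (3 * (κ ^ 2 - κ' ^ 2) + μ) * x + (κ' ^ 3 - κ ^ 3) :=
    fun x => by ring
  rw [sum_congr rfl fun x _ => congrArg _ (hquad x),
    AddChar.norm_sum_quadratic_eq_sqrt_card (ZMod.isPrimitive_stdAddChar M) h2
      (mul_ne_zero h3 hκ), ZMod.card]
end

section
/- Let M ≥ 5 be prime. Consider the family of M² + M unit vectors in ℂ^M consisting of the normalized Gabor frame vectors (1/√M)·g_{k,l} for k, l ∈ {0,…,M−1} together with the M standard basis vectors e_0,…,e_{M−1} of ℂ^M. Then any two distinct vectors u ≠ v from this family satisfy |⟨u, v⟩| ≤ 1/√M. In particular, adjoining the standard orthonormal basis to the normalized Gabor frame does not increase the maximal pairwise correlation beyond 1/√M. -/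
open scoped BigOperators

/-!
With `ψ(x) = exp(2πi x/M)` on `ZMod M`, the correlation `⟨g_{k,l}, g_{k',l'}⟩` is the sum of
`ψ` over the phase difference `(m-k)³ - (m-k')³ + (l-l')m`, a quadratic in `m` with leading
coefficient `3(k'-k)`. For `k ≠ k'` this is a quadratic Gauss sum, of modulus `√M` since
`M ∤ 6`; for `k = k'` the phase is a nonconstant linear one and the sum vanishes. After
normalization two Gabor vectors thus correlate by at most `√M / M = 1/√M`, a basis vector meets
a normalized Gabor vector in one coordinate of modulus `1/√M`, and distinct basis vectors are
orthogonal.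
-/

namespace AddChar

variable {F : Type*} [Field F] [Fintype F] {ψ : AddChar F ℂ}

/-- Weyl differencing: in `|S|² = ∑_y ∑_h ψ(q(y + h) - q(y))` the inner sum over `y` is a
character sum of `y ↦ ψ(2ahy)`, which vanishes unless `h = 0`. -/
theorem norm_sum_quadratic_sq (hψ : ψ.IsPrimitive) (h2 : (2 : F) ≠ 0) {a : F} (ha : a ≠ 0)
    (b c : F) : ‖∑ x, ψ (a * x ^ 2 + b * x + c)‖ ^ 2 = Fintype.card F := by
  classical
  set q : F → F := fun x => a * x ^ 2 + b * x + c
  have hdiff (y h : F) : q (y + h) - q y = y * (2 * a * h) + (a * h ^ 2 + b * h) := by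
    simp only [q]; ring
  have hnormSq : ((‖∑ x, ψ (q x)‖ ^ 2 : ℝ) : ℂ) = Fintype.card F := by
    calc ((‖∑ x, ψ (q x)‖ ^ 2 : ℝ) : ℂ)
        = ∑ y, ∑ h, ψ (q (y + h) - q y) := by
          rw [Complex.ofReal_pow, ← Complex.mul_conj', map_sum, Finset.sum_mul_sum,
            Finset.sum_comm]
          refine Finset.sum_congr rfl fun y _ => ?_
          rw [← Equiv.sum_comp (Equiv.addLeft y)]
          simp only [Equiv.coe_addLeft, map_sub_eq_div, ← inv_apply_eq_conj, div_eq_mul_inv]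
      _ = ∑ h, ψ (a * h ^ 2 + b * h) * ∑ y, ψ (y * (2 * a * h)) := by
          simp_rw [hdiff, map_add_eq_mul, Finset.mul_sum, mul_comm]
          exact Finset.sum_comm
      _ = Fintype.card F := by
          simp_rw [sum_mulShift _ hψ, mul_eq_zero, h2, ha, false_or]
          simp
  exact_mod_cast hnormSq

end AddChar

namespace ZMod

lemma natCast_ne_zero_of_lt {n M : ℕ} (hn : n ≠ 0) (hnM : n < M) : (n : ZMod M) ≠ 0 := by
  rw [Ne, natCast_eq_zero_iff]
  exact fun h => (Nat.le_of_dvd (Nat.pos_of_ne_zero hn) h).not_gt hnM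

lemma finEquiv_apply {M : ℕ} [NeZero M] (m : Fin M) : finEquiv M m = (m : ℕ) := by
  obtain ⟨n, rfl⟩ := Nat.exists_eq_succ_of_ne_zero (NeZero.ne M)
  exact (Fin.cast_val_eq_self m).symm

end ZMod

section Gabor

variable {M : ℕ} [NeZero M]

local notation "ι" => ZMod.finEquiv M

lemma gabor_apply (k l m : Fin M) :
    gabor M k l m = ZMod.stdAddChar ((ι m - ι k) ^ 3 + ι l * ι m) := by
  have hcast : (ι m - ι k) ^ 3 + ι l * ι m = (((m - k : ℤ) ^ 3 + l * m : ℤ) : ZMod M) := by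
    simp only [ZMod.finEquiv_apply]; push_cast; rfl
  rw [hcast, ZMod.stdAddChar_coe, gabor]
  congr 1
  push_cast
  ring

lemma norm_gabor_apply (k l m : Fin M) : ‖gabor M k l m‖ = 1 := by
  rw [gabor_apply, AddChar.norm_apply]

lemma gip_gabor_gabor (k l k' l' : Fin M) :
    gip M (gabor M k l) (gabor M k' l') = ∑ x : ZMod M, ZMod.stdAddChar
      (3 * (ι k' - ι k) * x ^ 2 + (3 * (ι k ^ 2 - ι k' ^ 2) + ι l - ι l') * x
        + (ι k' ^ 3 - ι k ^ 3)) := by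
  refine Fintype.sum_equiv (ZMod.finEquiv M : Fin M ≃ ZMod M) _ _ fun m => ?_
  rw [gabor_apply, gabor_apply, ← AddChar.map_neg_eq_conj, ← AddChar.map_add_eq_mul,
    RingEquiv.coe_toEquiv]
  congr 1
  ring

theorem norm_gip_gabor_le_sqrt (hM : M.Prime) (hM5 : 5 ≤ M) {k l k' l' : Fin M}
    (h : (k, l) ≠ (k', l')) : ‖gip M (gabor M k l) (gabor M k' l')‖ ≤ √M := by
  have : Fact M.Prime := ⟨hM⟩
  rw [gip_gabor_gabor]
  by_cases hk : k = k'
  · subst hk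
    have hl : ι l - ι l' ≠ 0 :=
      sub_ne_zero.2 ((ZMod.finEquiv M).injective.ne fun hl => h (by rw [hl]))
    have hlin (x : ZMod M) : 3 * (ι k - ι k) * x ^ 2 + (3 * (ι k ^ 2 - ι k ^ 2) + ι l - ι l') * x
        + (ι k ^ 3 - ι k ^ 3) = x * (ι l - ι l') := by ring
    simp_rw [hlin, AddChar.sum_mulShift _ (ZMod.isPrimitive_stdAddChar M), if_neg hl]
    simp
  · have h2 : (2 : ZMod M) ≠ 0 := mod_cast ZMod.natCast_ne_zero_of_lt two_ne_zero (by omega : 2 < M)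
    have h3 : (3 : ZMod M) ≠ 0 :=
      mod_cast ZMod.natCast_ne_zero_of_lt three_ne_zero (by omega : 3 < M)
    have ha : 3 * (ι k' - ι k) ≠ 0 :=
      mul_ne_zero h3 (sub_ne_zero.2 ((ZMod.finEquiv M).injective.ne (Ne.symm hk)))
    refine Real.le_sqrt_of_sq_le (le_of_eq ?_)
    rw [AddChar.norm_sum_quadratic_sq (ZMod.isPrimitive_stdAddChar M) h2 ha, ZMod.card]

end Gabor

lemma gip_single_right {M : ℕ} (u : Fin M → ℂ) (m : Fin M) : gip M u (Pi.single m 1) = u m := by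
  simp [gip, Pi.single_apply]

lemma gip_single_left {M : ℕ} (v : Fin M → ℂ) (m : Fin M) :
    gip M (Pi.single m 1) v = (starRingEnd ℂ) (v m) := by
  simp [gip, Pi.single_apply]

lemma norm_gip_smul_smul {M : ℕ} (c d : ℂ) (u v : Fin M → ℂ) :
    ‖gip M (c • u) (d • v)‖ = ‖c‖ * ‖d‖ * ‖gip M u v‖ := by
  have : gip M (c • u) (d • v) = c * (starRingEnd ℂ) d * gip M u v := by
    simp only [gip, Finset.mul_sum, Pi.smul_apply, smul_eq_mul, map_mul]
    exact Finset.sum_congr rfl fun _ _ => by ring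
  rw [this, norm_mul, norm_mul, Complex.norm_conj]

/-- For a prime `M ≥ 5`, any two distinct vectors from the family consisting of the
normalized Gabor vectors `(1/√M)·g_{k,l}` together with the `M` standard basis vectors
of `ℂ^M` have correlation modulus at most `1/√M`. -/
theorem gabor_plus_standard_basis_correlation (M : ℕ) (hM : Nat.Prime M) (hM5 : 5 ≤ M)
    (F : Set (Fin M → ℂ))
    (hF : F = (Set.range fun p : Fin M × Fin M =>
        ((1 / Real.sqrt M : ℝ) : ℂ) • gabor M p.1 p.2) ∪
      (Set.range fun m : Fin M => (Pi.single m 1 : Fin M → ℂ)))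
    (u v : Fin M → ℂ) (hu : u ∈ F) (hv : v ∈ F) (huv : u ≠ v) :
    ‖gip M u v‖ ≤ 1 / Real.sqrt M := by
  have : NeZero M := ⟨hM.ne_zero⟩
  have hc : ‖((1 / √M : ℝ) : ℂ)‖ = 1 / √M := by
    rw [Complex.norm_real, Real.norm_of_nonneg (by positivity)]
  subst hF
  rcases hu with ⟨⟨k, l⟩, rfl⟩ | ⟨m, rfl⟩ <;> rcases hv with ⟨⟨k', l'⟩, rfl⟩ | ⟨m', rfl⟩ <;>
    dsimp only at huv ⊢
  · have hkl : (k, l) ≠ (k', l') := by rintro ⟨⟩; exact huv rfl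
    calc _ = 1 / √M * (1 / √M) * ‖gip M (gabor M k l) (gabor M k' l')‖ := by
          rw [norm_gip_smul_smul, hc]
      _ ≤ 1 / √M * (1 / √M) * √M := by gcongr; exact norm_gip_gabor_le_sqrt hM hM5 hkl
      _ = 1 / √M := by field_simp
  · rw [gip_single_right, Pi.smul_apply, norm_smul, hc, norm_gabor_apply, mul_one]
  · rw [gip_single_left, Complex.norm_conj, Pi.smul_apply, norm_smul, hc, norm_gabor_apply, mul_one]
  · have hm : m' ≠ m := fun h => huv (by rw [h])
    rw [gip_single_right, Pi.single_eq_of_ne hm, norm_zero]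
    positivity
end

section
/- Let M ≥ 5 be prime and let 1 ≤ ñ ≤ ⌊M/2⌋. Let k_1,…,k_ñ ∈ {0,…,M−1} be pairwise distinct and let l_1,…,l_ñ ∈ {0,…,M−1} be arbitrary. Then the ñ Gabor frame vectors g_{k_1,l_1},…,g_{k_ñ,l_ñ} (one codeword per active user) are linearly independent in ℂ^M; in particular, the subspace of ℂ^M they span has dimension exactly ñ. -/
open scoped BigOperators

/-!
Expanding the cube, `g_{k,l}(m) = ψ(m³) ψ(-k³) ψ(-3k m² + (3k² + l) m)` with `ψ` the standard
additive character of `𝔽_p`, `p = M`, so it suffices that the chirps `m ↦ ψ(aᵢ m² + bᵢ m)` with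
distinct `aᵢ` are independent when `2n < p`. Twisting a relation `∑ dᵢ ψ(aᵢ m² + bᵢ m) = 0` by
`ψ(c m²)` and summing over `m` produces quadratic Gauss sums, hence `∑ dᵢ χ(aᵢ + c) ζ^{qᵢ(c)} = 0`
for every `c` with all `aᵢ + c ≠ 0`. By Euler's criterion the matrix `(χ(aᵢ + c_j) ζ^{q_{ij}})`
reduces modulo `1 - ζ` to `((aᵢ + c_j)^{(p-1)/2})`, and the `c_j` can be chosen to make the latter
invertible over `𝔽_p`: for `λ ≠ 0` the polynomial `∑ λᵢ (X + aᵢ)^{(p-1)/2}` is nonzero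
(Vandermonde) and has fewer than `p - n` roots. Finally, a matrix over `ℤ[ζ]` whose reduction
modulo `1 - ζ` is invertible over `𝔽_p` is itself nonsingular.
-/

open Finset Polynomial

section QuadraticGaussSum

variable {F R : Type*} [Field F] [Fintype F] [CommRing R]

theorem sum_addChar_mul_sq_add_mul (h2 : (2 : F) ≠ 0) (ψ : AddChar F R) {α : F} (hα : α ≠ 0)
    (β : F) : ∑ x, ψ (α * x ^ 2 + β * x) = ψ (-β ^ 2 / (4 * α)) * ∑ x, ψ (α * x ^ 2) := by
  have h4 : (4 : F) ≠ 0 := by simpa [show (4 : F) = 2 * 2 by norm_num] using h2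
  have hsq : ∀ x, α * x ^ 2 + β * x = -β ^ 2 / (4 * α) + α * (x + β / (2 * α)) ^ 2 := by
    intro x
    field_simp
    ring
  simp_rw [hsq, AddChar.map_add_eq_mul, ← Finset.mul_sum]
  congr 1
  exact Fintype.sum_equiv (Equiv.addRight (β / (2 * α))) _ _ fun x => rfl

variable [DecidableEq F]

theorem sum_comp_sq_eq_sum_quadraticChar_add_one_mul (hF : ringChar F ≠ 2) (f : F → R) :
    ∑ x, f (x ^ 2) = ∑ u, ((quadraticChar F u : R) + 1) * f u := by
  rw [← Finset.sum_fiberwise univ (fun x : F => x ^ 2)]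
  refine Fintype.sum_congr _ _ fun u => ?_
  have hcard := quadraticChar_card_sqrts hF u
  rw [Set.toFinset_ofPred] at hcard
  rw [Finset.sum_congr rfl fun x hx => by rw [(Finset.mem_filter.mp hx).2], Finset.sum_const,
    nsmul_eq_mul]
  congr 1
  exact_mod_cast congrArg (Int.cast : ℤ → R) hcard

theorem sum_addChar_mul_sq [IsDomain R] (hF : ringChar F ≠ 2) {ψ : AddChar F R}
    (hψ : ψ.IsPrimitive) {α : F} (hα : α ≠ 0) :
    ∑ x, ψ (α * x ^ 2) = (quadraticChar F).ringHomComp (Int.castRingHom R) α *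
      gaussSum ((quadraticChar F).ringHomComp (Int.castRingHom R)) ψ := by
  set χ := (quadraticChar F).ringHomComp (Int.castRingHom R)
  have hχα : χ α * χ α = 1 := by
    rw [← map_mul, ← sq, MulChar.ringHomComp_apply, quadraticChar_sq_one' hα, map_one]
  have hshift := gaussSum_mulShift χ ψ hα.isUnit.unit
  rw [IsUnit.unit_spec] at hshift
  calc ∑ x, ψ (α * x ^ 2)
      = ∑ u, χ u * ψ.mulShift α u + ∑ u, ψ (u * α) := by
        rw [sum_comp_sq_eq_sum_quadraticChar_add_one_mul hF fun u => ψ (α * u),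
          ← Finset.sum_add_distrib]
        refine Fintype.sum_congr _ _ fun u => ?_
        rw [AddChar.mulShift_apply, mul_comm u α]
        simp only [χ, MulChar.ringHomComp_apply, eq_intCast]
        ring
    _ = χ α * gaussSum χ ψ := by
        rw [AddChar.sum_mulShift α hψ, if_neg hα, Nat.cast_zero, add_zero, ← hshift,
          ← mul_assoc, hχα, one_mul]
        rfl

end QuadraticGaussSum

section Interpolation

variable {F : Type*} [Field F] {h n : ℕ}

theorem cast_choose_ne_zero (hh : (h.factorial : F) ≠ 0) {k : ℕ} (hk : k ≤ h) :
    (h.choose k : F) ≠ 0 := by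
  intro h0
  apply hh
  rw [← Nat.choose_mul_factorial_mul_factorial hk]
  push_cast
  rw [h0, zero_mul, zero_mul]

theorem eq_zero_of_sum_C_mul_X_add_C_pow_eq_zero (hh : (h.factorial : F) ≠ 0) (hn : n ≤ h + 1)
    {a : Fin n → F} (ha : Function.Injective a) {c : Fin n → F}
    (hc : ∑ i, C (c i) * (X + C (a i)) ^ h = 0) : c = 0 := by
  refine Matrix.eq_zero_of_forall_pow_sum_mul_pow_eq_zero ha fun r => ?_
  have hr : (r : ℕ) ≤ h := by omega
  have hcoeff := congrArg (coeff · (h - r)) hc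
  simp only [finsetSum_coeff, coeff_C_mul, coeff_X_add_C_pow, Nat.sub_sub_self hr,
    coeff_zero] at hcoeff
  simpa [← mul_assoc, ← Finset.sum_mul, cast_choose_ne_zero hh (Nat.sub_le h r)] using hcoeff

theorem linearIndependent_pow_add [Fintype F] (hh : (h.factorial : F) ≠ 0) (hn : n ≤ h + 1)
    (hcard : n + h < Fintype.card F) {a : Fin n → F} (ha : Function.Injective a) :
    LinearIndependent F fun i (c : {c : F // ∀ j, a j + c ≠ 0}) => (a i + c) ^ h := by
  classical
  rw [Fintype.linearIndependent_iff]
  intro w hw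
  set P : F[X] := ∑ i, C (w i) * (X + C (a i)) ^ h
  have hdeg : P.natDegree ≤ h := by
    refine natDegree_sum_le_of_forall_le _ _ fun i _ => (natDegree_C_mul_le _ _).trans ?_
    exact (natDegree_pow_le_of_le h (natDegree_X_add_C (a i)).le).trans_eq (mul_one h)
  have hroots : Fintype.card F - n ≤ #(univ.filter fun c => ∀ j, a j + c ≠ 0) := by
    have hbad : #(univ.filter fun c : F => ¬ ∀ j, a j + c ≠ 0) ≤ n := by
      refine (card_le_card fun c hc => ?_).trans
        ((card_image_le (s := univ) (f := fun j => -a j)).trans_eq (card_fin n))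
      simp only [mem_filter, mem_univ, true_and, not_forall, not_not] at hc
      obtain ⟨j, hj⟩ := hc
      exact mem_image.mpr ⟨j, mem_univ _, by linear_combination -hj⟩
    have := card_filter_add_card_filter_not (s := univ) fun c : F => ∀ j, a j + c ≠ 0
    rw [card_univ] at this
    omega
  have hP : P = 0 := by
    refine eq_zero_of_natDegree_lt_card_of_eval_eq_zero' P
      (univ.filter fun c => ∀ j, a j + c ≠ 0) (fun c hc => ?_) (by omega)
    simpa [P, eval_finsetSum, add_comm c] using congrFun hw ⟨c, (mem_filter.mp hc).2⟩
  exact congrFun (eq_zero_of_sum_C_mul_X_add_C_pow_eq_zero hh hn ha hP)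

end Interpolation

theorem exists_det_ne_zero_of_linearIndependent {K ι m : Type*} [Field K] [Fintype ι]
    [Fintype m] [DecidableEq m] {v : m → ι → K} (hv : LinearIndependent K v) :
    ∃ j : m → ι, (Matrix.of fun i k => v i (j k)).det ≠ 0 := by
  set A : Matrix m ι K := Matrix.of v
  have hcols : Submodule.span K (Set.range A.col) = ⊤ := by
    refine Submodule.eq_top_of_finrank_eq ?_
    rw [← Matrix.rank_eq_finrank_span_cols, Matrix.rank_eq_finrank_span_row,
      Module.finrank_fintype_fun_eq_card]
    exact finrank_span_eq_card hv
  obtain ⟨κ, f, -, hspan, hli⟩ := exists_linearIndependent' K A.col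
  have : Finite κ := hli.finite
  have : Fintype κ := Fintype.ofFinite κ
  have hκ : Fintype.card κ = Fintype.card m := by
    rw [← finrank_span_eq_card hli, hspan, hcols, finrank_top, Module.finrank_fintype_fun_eq_card]
  let e : m ≃ κ := Fintype.equivOfCardEq hκ.symm
  refine ⟨f ∘ e, ?_⟩
  have hcols' : LinearIndependent K (Matrix.of fun i k => v i (f (e k))).col :=
    hli.comp e e.injective
  exact ((Matrix.linearIndependent_cols_iff_isUnit.mp hcols').map Matrix.detMonoidHom).ne_zero

/-- The determinant is `P(ζ)` for `P ∈ ℤ[X]` with `P(1) = det s`; if it vanished, `Φ_p ∣ P`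
and `p = Φ_p(1)` would divide `det s`. -/
theorem det_ne_zero_of_det_map_intCast_ne_zero {K m : Type*} [Field K] [CharZero K] [Fintype m]
    [DecidableEq m] {p : ℕ} [Fact p.Prime] {ζ : K} (hζ : IsPrimitiveRoot ζ p) (s : Matrix m m ℤ)
    (e : Matrix m m ℕ) (hs : (s.map (Int.cast : ℤ → ZMod p)).det ≠ 0) :
    (Matrix.of fun i j => (s i j : K) * ζ ^ e i j).det ≠ 0 := by
  have hp := (Fact.out : p.Prime)
  set P : ℤ[X] := (Matrix.of fun i j => C (s i j) * X ^ e i j).det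
  have hPζ : aeval ζ P = (Matrix.of fun i j => (s i j : K) * ζ ^ e i j).det := by
    rw [AlgHom.map_det]
    congr 1
    ext i j
    simp
  have hP1 : P.eval 1 = s.det := by
    rw [← coe_evalRingHom, RingHom.map_det]
    congr 1
    ext i j
    simp
  intro h0
  obtain ⟨R, hR⟩ : cyclotomic p ℤ ∣ P := by
    rw [cyclotomic_eq_minpoly hζ hp.pos]
    exact minpoly.isIntegrallyClosed_dvd (hζ.isIntegral hp.pos) (hPζ.trans h0)
  apply hs
  change ((Int.castRingHom (ZMod p)).mapMatrix s).det = 0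
  rw [← RingHom.map_det, ← hP1, hR, eval_mul, eval_one_cyclotomic_prime]
  simp

section Chirp
open ZMod Complex

noncomputable def chirp {p : ℕ} [NeZero p] (a b m : ZMod p) : ℂ := stdAddChar (a * m ^ 2 + b * m)

theorem stdAddChar_eq_pow {p : ℕ} [NeZero p] (x : ZMod p) :
    stdAddChar x = exp (2 * Real.pi * I / p) ^ x.val := by
  rw [stdAddChar_apply, toCircle_apply, ← Complex.exp_nat_mul]
  congr 1
  ring

theorem stdAddChar_ne_zero {p : ℕ} [NeZero p] (x : ZMod p) : stdAddChar x ≠ 0 :=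
  Circle.coe_ne_zero _

variable {p : ℕ} [Fact p.Prime]

theorem twisted_sum_eq_zero_of_sum_smul_chirp_eq_zero (hp2 : p ≠ 2) {n : ℕ}
    {a b : Fin n → ZMod p} {d : Fin n → ℂ} (hd : ∑ i, d i • chirp (a i) (b i) = 0) {c : ZMod p}
    (hc : ∀ i, a i + c ≠ 0) :
    ∑ i, d i * ((quadraticChar (ZMod p) (a i + c) : ℂ) *
      stdAddChar (-b i ^ 2 / (4 * (a i + c)))) = 0 := by
  have hF : ringChar (ZMod p) ≠ 2 := by rwa [ZMod.ringChar_zmod_n]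
  set χ := (quadraticChar (ZMod p)).ringHomComp (Int.castRingHom ℂ)
  have hG : gaussSum χ stdAddChar ≠ 0 :=
    gaussSum_ne_zero_of_nontrivial (by simp [(Fact.out : p.Prime).ne_zero])
      ((MulChar.ringHomComp_ne_one_iff (RingHom.injective_int _)).mpr (quadraticChar_ne_one hF))
      (isPrimitive_stdAddChar p)
  have hterm : ∀ i, ∑ m, stdAddChar (c * m ^ 2) * chirp (a i) (b i) m =
      gaussSum χ stdAddChar * ((quadraticChar (ZMod p) (a i + c) : ℂ) *
        stdAddChar (-b i ^ 2 / (4 * (a i + c)))) := by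
    intro i
    simp_rw [chirp, ← AddChar.map_add_eq_mul, ← add_assoc, ← add_mul, add_comm c]
    rw [sum_addChar_mul_sq_add_mul (Ring.two_ne_zero hF) _ (hc i),
      sum_addChar_mul_sq hF (isPrimitive_stdAddChar p) (hc i)]
    simp only [χ, MulChar.ringHomComp_apply, eq_intCast]
    ring
  refine (mul_eq_zero.mp ?_).resolve_left hG
  calc gaussSum χ stdAddChar * _
      = ∑ i, d i * ∑ m, stdAddChar (c * m ^ 2) * chirp (a i) (b i) m := by
        simp_rw [hterm, Finset.mul_sum, mul_left_comm]
    _ = ∑ m, stdAddChar (c * m ^ 2) * (∑ i, d i • chirp (a i) (b i)) m := by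
        simp_rw [Finset.sum_apply, Pi.smul_apply, smul_eq_mul, Finset.mul_sum]
        rw [Finset.sum_comm]
        simp_rw [mul_left_comm]
    _ = 0 := by simp only [hd, Pi.zero_apply, mul_zero, Finset.sum_const_zero]

theorem linearIndependent_chirp (hp2 : p ≠ 2) {n : ℕ} (hn : 2 * n < p) {a : Fin n → ZMod p}
    (ha : Function.Injective a) (b : Fin n → ZMod p) :
    LinearIndependent ℂ fun i => chirp (a i) (b i) := by
  have hp := (Fact.out : p.Prime)
  have hF : ringChar (ZMod p) ≠ 2 := by rwa [ZMod.ringChar_zmod_n]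
  have hfact : ((p / 2).factorial : ZMod p) ≠ 0 := by
    rw [Ne, ZMod.natCast_eq_zero_iff, hp.dvd_factorial]
    omega
  obtain ⟨c, hc⟩ := exists_det_ne_zero_of_linearIndependent <|
    linearIndependent_pow_add hfact (by omega) (by rw [ZMod.card]; omega) ha
  have hB : (Matrix.of fun i j => (quadraticChar (ZMod p) (a i + c j) : ℂ) *
      exp (2 * Real.pi * I / p) ^ (-b i ^ 2 / (4 * (a i + c j))).val).det ≠ 0 := by
    have hs : (Matrix.of fun i j => quadraticChar (ZMod p) (a i + c j)).map (Int.cast : ℤ → ZMod p)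
        = Matrix.of fun i j => (a i + c j) ^ (p / 2) := by
      ext i j
      simpa [ZMod.card] using quadraticChar_eq_pow_of_char_ne_two' hF (a i + c j)
    refine det_ne_zero_of_det_map_intCast_ne_zero (isPrimitiveRoot_exp p hp.ne_zero)
      (Matrix.of fun i j => quadraticChar (ZMod p) (a i + c j)) _ ?_
    rw [hs]
    exact hc
  rw [Fintype.linearIndependent_iff]
  intro d hd
  refine congrFun (Matrix.eq_zero_of_vecMul_eq_zero hB (funext fun j => ?_))
  simpa [Matrix.vecMul, dotProduct, stdAddChar_eq_pow] using
    twisted_sum_eq_zero_of_sum_smul_chirp_eq_zero hp2 hd (c j).2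

end Chirp

section Gabor
open ZMod

theorem natCast_fin_val_injective {M : ℕ} :
    Function.Injective fun m : Fin M => ((m : ℕ) : ZMod M) := by
  intro x y h
  have := congrArg ZMod.val h
  simp only [ZMod.val_natCast_of_lt x.2, ZMod.val_natCast_of_lt y.2] at this
  exact Fin.ext this

variable {M : ℕ} [NeZero M]

theorem gabor_eq_mul_chirp (k l m : Fin M) :
    gabor M k l m = stdAddChar (((m : ℕ) : ZMod M) ^ 3) * stdAddChar (-((k : ℕ) : ZMod M) ^ 3) *
      chirp (-3 * ((k : ℕ) : ZMod M)) (3 * ((k : ℕ) : ZMod M) ^ 2 + ((l : ℕ) : ZMod M))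
        ((m : ℕ) : ZMod M) := by
  have hexp := stdAddChar_coe (N := M) ((((m : ℕ) : ℤ) - (k : ℕ)) ^ 3 + ((l : ℕ) : ℤ) * (m : ℕ))
  push_cast at hexp
  rw [gabor, ← hexp, chirp, ← AddChar.map_add_eq_mul, ← AddChar.map_add_eq_mul]
  congr 1
  ring

theorem sum_smul_chirp_eq_zero_of_sum_smul_gabor_eq_zero {n : ℕ} {k l : Fin n → Fin M}
    {g : Fin n → ℂ} (hg : ∑ i, g i • gabor M (k i) (l i) = 0) :
    ∑ i, (g i * stdAddChar (-((k i : ℕ) : ZMod M) ^ 3)) •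
      chirp (-3 * ((k i : ℕ) : ZMod M)) (3 * ((k i : ℕ) : ZMod M) ^ 2 + ((l i : ℕ) : ZMod M)) =
      0 := by
  ext x
  have hx := congrFun hg ⟨x.val, x.val_lt⟩
  simp only [Finset.sum_apply, Pi.smul_apply, smul_eq_mul, Pi.zero_apply, gabor_eq_mul_chirp,
    ZMod.natCast_zmod_val] at hx ⊢
  refine (mul_eq_zero.mp ?_).resolve_left (stdAddChar_ne_zero (x ^ 3))
  rw [← hx, Finset.mul_sum]
  exact Finset.sum_congr rfl fun i _ => by ring

end Gabor

theorem gabor_active_set_linearIndependent_general (M n : ℕ) (hM : Nat.Prime M) (hM5 : 5 ≤ M)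
    (hn2 : n ≤ M / 2)
    (k l : Fin n → Fin M) (hk : Function.Injective k) :
    LinearIndependent ℂ (fun i : Fin n => gabor M (k i) (l i)) ∧
    Module.finrank ℂ
      (Submodule.span ℂ (Set.range fun i : Fin n => gabor M (k i) (l i))) = n := by
  have : Fact M.Prime := ⟨hM⟩
  have h3 : (3 : ZMod M) ≠ 0 := by
    intro h0
    have := Nat.le_of_dvd (by norm_num) ((ZMod.natCast_eq_zero_iff 3 M).mp (by exact_mod_cast h0))
    omega
  have h2n : 2 * n < M := by
    obtain ⟨t, rfl⟩ := hM.odd_of_ne_two (by omega)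
    omega
  have hchirp := linearIndependent_chirp (by omega) h2n
    ((mul_right_injective₀ (neg_ne_zero.mpr h3)).comp (natCast_fin_val_injective.comp hk))
    fun i => 3 * ((k i : ℕ) : ZMod M) ^ 2 + ((l i : ℕ) : ZMod M)
  have hli : LinearIndependent ℂ fun i => gabor M (k i) (l i) := by
    rw [Fintype.linearIndependent_iff] at hchirp ⊢
    intro g hg i
    have hd := hchirp _ (sum_smul_chirp_eq_zero_of_sum_smul_gabor_eq_zero hg) i
    exact (mul_eq_zero.mp hd).resolve_right (stdAddChar_ne_zero _)
  exact ⟨hli, by rw [finrank_span_eq_card hli, Fintype.card_fin]⟩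

/-- For a prime `M ≥ 5` and `1 ≤ ñ ≤ ⌊M/2⌋`, any `ñ` Gabor vectors with pairwise
distinct shift indices (one codeword per active user) are linearly independent in `ℂ^M`;
in particular they span a subspace of dimension exactly `ñ`. -/
theorem gabor_active_set_linearIndependent (M n : ℕ) (hM : Nat.Prime M) (hM5 : 5 ≤ M)
    (hn1 : 1 ≤ n) (hn2 : n ≤ M / 2)
    (k l : Fin n → Fin M) (hk : Function.Injective k) :
    LinearIndependent ℂ (fun i : Fin n => gabor M (k i) (l i)) ∧
    Module.finrank ℂ
      (Submodule.span ℂ (Set.range fun i : Fin n => gabor M (k i) (l i))) = n :=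
  gabor_active_set_linearIndependent_general M n hM hM5 hn2 k l hk
end
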